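/- For each sign sequence σ ∈ Σ_{n_0} and each nonzero constant Ĉ satisfying the consistency equation Ĉ = (1/n)(1 + Σ_{i=1}^{n_0} σ_i √(1 − ((i−n_0−1)a/(nKĈ))²) + Σ_{i=n_0+1}^{2n_0} σ_i √(1 − ((i−n_0)a/(nKĈ))²)), the point v^σ ∈ 𝕋^{2n_0} defined by v_i^σ = φ_i if σ_i = 1, v_i^σ = π − φ_i if σ_i = −1 and φ_i > 0, v_i^σ = −φ_i − π if σ_i = −1 and φ_i < 0, is an equilibrium of the reduced Kuramoto system. Conversely, every equilibrium of the reduced Kuramoto system is of this form for some σ ∈ Σ_{n_0} and some such Ĉ. -/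

import Mathlib

open Real Set Filter

/-- coefficient of the natural frequency of the `i`-th oscillator (0-indexed) in the reduced system:
`i - n0` for `i < n0` (paper's `i - n0 - 1`, 1-indexed) and `i - n0 + 1` otherwise. -/
noncomputable def redCoeff (n0 : ℕ) (i : Fin (2 * n0)) : ℝ :=
  if (i : ℕ) < n0 then (i : ℕ) - (n0 : ℝ) else (i : ℕ) - (n0 : ℝ) + 1

/-- right-hand side of the reduced Kuramoto system on `𝕋^{2 n0}` (with `n = 2 n0 + 1`, `ν = a/n`). -/
noncomputable def redField (n0 : ℕ) (a K : ℝ) (v : Fin (2 * n0) → ℝ) (i : Fin (2 * n0)) : ℝ :=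
  redCoeff n0 i * (a / (2 * (n0 : ℝ) + 1)) -
    (K / (2 * (n0 : ℝ) + 1)) *
      (2 * Real.sin (v i) +
        ∑ j ∈ Finset.univ.erase i, (Real.sin (v j) - Real.sin (v j - v i)))

/-- the function `χ^σ`. -/
noncomputable def chi (n0 : ℕ) (σ : Fin (2 * n0) → ℝ) (ξ : ℝ) : ℝ :=
  (ξ / n0) * (1 + ∑ i, σ i * Real.sqrt (1 - (redCoeff n0 i * ξ / n0) ^ 2))

/-- the function `h^σ`. -/
noncomputable def hSigma (n0 : ℕ) (σ : Fin (2 * n0) → ℝ) (ξ : ℝ) : ℝ :=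
  (1 / n0) * ∑ i, σ i * (redCoeff n0 i / n0) ^ 2 /
    Real.sqrt (1 - (redCoeff n0 i * ξ / n0) ^ 2)

/-- the consistency equation for `Ĉ^σ`. -/
def ConsistentC (n0 : ℕ) (a K : ℝ) (σ : Fin (2 * n0) → ℝ) (C : ℝ) : Prop :=
  C ≠ 0 ∧
  (∀ i, |redCoeff n0 i * a / ((2 * (n0 : ℝ) + 1) * K * C)| ≤ 1) ∧
  C = (1 / (2 * (n0 : ℝ) + 1)) *
    (1 + ∑ i, σ i * Real.sqrt (1 - (redCoeff n0 i * a / ((2 * (n0 : ℝ) + 1) * K * C)) ^ 2))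

/-- the angles `φ_i = arcsin((i−n0−1)a/(nKĈ))` resp. `arcsin((i−n0)a/(nKĈ))`. -/
noncomputable def phiC (n0 : ℕ) (a K C : ℝ) (i : Fin (2 * n0)) : ℝ :=
  Real.arcsin (redCoeff n0 i * a / ((2 * (n0 : ℝ) + 1) * K * C))

/-- the angles `φ_i = ± ξ`-parametrized version. -/
noncomputable def phiXi (n0 : ℕ) (s ξ : ℝ) (i : Fin (2 * n0)) : ℝ :=
  s * Real.arcsin (redCoeff n0 i * ξ / n0)

/-- the point `v^σ` built from signs `σ` and angles `φ`. -/
noncomputable def vSigma (n0 : ℕ) (σ : Fin (2 * n0) → ℝ) (φ : Fin (2 * n0) → ℝ)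
    (i : Fin (2 * n0)) : ℝ :=
  if σ i = 1 then φ i else if 0 < φ i then π - φ i else -φ i - π

/-- `v` is a solution of the reduced Kuramoto system. -/
def IsRedSol (n0 : ℕ) (a K : ℝ) (v : ℝ → Fin (2 * n0) → ℝ) : Prop :=
  ∀ t : ℝ, ∀ i, HasDerivAt (fun s => v s i) (redField n0 a K (v t) i) t

/-- Lyapunov stability of an equilibrium of the reduced Kuramoto system. -/
def RedStable (n0 : ℕ) (a K : ℝ) (vstar : Fin (2 * n0) → ℝ) : Prop :=
  ∀ ε > 0, ∃ δ > 0, ∀ v : ℝ → Fin (2 * n0) → ℝ, IsRedSol n0 a K v →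
    dist (v 0) vstar < δ → ∀ t ≥ 0, dist (v t) vstar < ε

/-- asymptotic stability of an equilibrium of the reduced Kuramoto system. -/
def RedAsympStable (n0 : ℕ) (a K : ℝ) (vstar : Fin (2 * n0) → ℝ) : Prop :=
  RedStable n0 a K vstar ∧
  ∃ δ > 0, ∀ v : ℝ → Fin (2 * n0) → ℝ, IsRedSol n0 a K v →
    dist (v 0) vstar < δ → Tendsto (fun t => v t) atTop (nhds vstar)

lemma coeff_sum (n0 : ℕ) : ∑ i, redCoeff n0 i = 0 := by
  have hrev : ∑ i, redCoeff n0 i = ∑ i : Fin (2*n0), redCoeff n0 i.rev :=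
    (Fintype.sum_bijective Fin.rev Fin.rev_bijective _ _ fun i => rfl).symm
  have hpair : ∀ i : Fin (2 * n0), redCoeff n0 i + redCoeff n0 i.rev = 0 := by
    intro i
    have hi := i.isLt
    have hrv : (i.rev : ℕ) = 2 * n0 - 1 - i := by simp [Fin.rev]; omega
    unfold redCoeff
    rcases lt_or_ge (i : ℕ) n0 with h | h
    · rw [if_pos h, if_neg (by omega), hrv]
      push_cast [Nat.cast_sub (by omega : (i:ℕ) ≤ 2 * n0 - 1), Nat.cast_sub (by omega : 1 ≤ 2 * n0)]
      ring
    · rw [if_neg (by omega), if_pos (by omega : (i.rev : ℕ) < n0), hrv]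
      push_cast [Nat.cast_sub (by omega : (i:ℕ) ≤ 2 * n0 - 1), Nat.cast_sub (by omega : 1 ≤ 2 * n0)]
      ring
  have h2 : 2 * ∑ i, redCoeff n0 i = 0 := by
    calc 2 * ∑ i, redCoeff n0 i = ∑ i, redCoeff n0 i + ∑ i : Fin (2*n0), redCoeff n0 i.rev := by
          rw [← hrev]; ring
      _ = ∑ i : Fin (2*n0), (redCoeff n0 i + redCoeff n0 i.rev) := (Finset.sum_add_distrib).symm
      _ = 0 := by simp [hpair]
  linarith

lemma coeff_ne (n0 : ℕ) (i : Fin (2 * n0)) : redCoeff n0 i ≠ 0 := by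
  have hi := i.isLt
  unfold redCoeff
  rcases lt_or_ge (i : ℕ) n0 with h | h
  · rw [if_pos h]
    have : ((i:ℕ):ℝ) < (n0 : ℝ) := by exact_mod_cast h
    linarith
  · rw [if_neg (by omega)]
    have : (n0 : ℝ) ≤ ((i:ℕ):ℝ) := by exact_mod_cast h
    linarith

lemma eq_of_sin_cos {x y : ℝ} (hs : Real.sin x = Real.sin y) (hc : Real.cos x = Real.cos y) :
    ∃ m : ℤ, x = y + 2 * π * m := by
  have h1 : Real.cos (x - y) = 1 := by
    rw [Real.cos_sub, hs, hc, ← Real.sin_sq_add_cos_sq y]; ring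
  obtain ⟨m, hm⟩ := (Real.cos_eq_one_iff _).mp h1
  exact ⟨m, by linarith [hm]⟩

lemma sin_cos_point (σv x : ℝ) (hσ : σv = 1 ∨ σv = -1) (h1 : -1 ≤ x) (h2 : x ≤ 1) :
    Real.sin (if σv = 1 then Real.arcsin x else
      if 0 < Real.arcsin x then π - Real.arcsin x else -Real.arcsin x - π) = x ∧
    Real.cos (if σv = 1 then Real.arcsin x else
      if 0 < Real.arcsin x then π - Real.arcsin x else -Real.arcsin x - π)
      = σv * Real.sqrt (1 - x ^ 2) := by
  rcases hσ with h | h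
  · rw [if_pos h, Real.sin_arcsin h1 h2, Real.cos_arcsin, h, one_mul]
    exact ⟨rfl, rfl⟩
  · rw [if_neg (by rw [h]; norm_num), h]
    by_cases hp : 0 < Real.arcsin x
    · rw [if_pos hp, Real.sin_pi_sub, Real.cos_pi_sub, Real.sin_arcsin h1 h2, Real.cos_arcsin]
      exact ⟨rfl, by ring⟩
    · rw [if_neg hp]
      have he : -Real.arcsin x - π = -(Real.arcsin x + π) := by ring
      rw [he, Real.sin_neg, Real.cos_neg, Real.sin_add_pi, Real.cos_add_pi, neg_neg,
        Real.sin_arcsin h1 h2, Real.cos_arcsin]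
      exact ⟨rfl, by ring⟩

lemma redField_eq (n0 : ℕ) (a K : ℝ) (v : Fin (2 * n0) → ℝ) (i : Fin (2 * n0)) :
    redField n0 a K v i =
    redCoeff n0 i * (a / (2 * (n0:ℝ) + 1)) - (K / (2 * (n0:ℝ) + 1)) *
      ((∑ j, Real.sin (v j)) + Real.sin (v i) * (1 + ∑ j, Real.cos (v j))
        - Real.cos (v i) * ∑ j, Real.sin (v j)) := by
  unfold redField
  rw [Finset.sum_erase_eq_sub (Finset.mem_univ i)]
  simp only [Real.sin_sub]
  rw [Finset.sum_sub_distrib, Finset.sum_sub_distrib, ← Finset.sum_mul, ← Finset.sum_mul]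
  ring

/-- For every sign sequence `σ` and every nonzero constant `Ĉ` solving the
consistency equation, the point `v^σ` is an equilibrium of the reduced Kuramoto system;
conversely every equilibrium is, modulo `2π` in each component, of this form. -/
theorem stmt7 (n0 : ℕ) (hn0 : 1 < n0) (a K : ℝ) (ha : 0 < a) (hK : 0 < K) :
    (∀ σ : Fin (2 * n0) → ℝ, (∀ i, σ i = 1 ∨ σ i = -1) →
      ∀ C : ℝ, ConsistentC n0 a K σ C →
        ∀ i, redField n0 a K (vSigma n0 σ (phiC n0 a K C)) i = 0) ∧
    (∀ w : Fin (2 * n0) → ℝ, (∀ i, redField n0 a K w i = 0) →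
      ∃ σ : Fin (2 * n0) → ℝ, (∀ i, σ i = 1 ∨ σ i = -1) ∧
        ∃ C : ℝ, ConsistentC n0 a K σ C ∧
          ∀ i, ∃ m : ℤ, w i = vSigma n0 σ (phiC n0 a K C) i + 2 * π * m) := by
  have hNpos : (0:ℝ) < 2 * (n0:ℝ) + 1 := by positivity
  have hNne : (2 * (n0:ℝ) + 1) ≠ 0 := ne_of_gt hNpos
  have hKne : K ≠ 0 := ne_of_gt hK
  constructor
  · rintro σ hσ C ⟨hC0, hbd, hCeq⟩ i
    have hb : ∀ j, -1 ≤ redCoeff n0 j * a / ((2 * (n0:ℝ) + 1) * K * C) ∧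
        redCoeff n0 j * a / ((2 * (n0:ℝ) + 1) * K * C) ≤ 1 := fun j => abs_le.mp (hbd j)
    have hsc : ∀ j, Real.sin (vSigma n0 σ (phiC n0 a K C) j)
          = redCoeff n0 j * a / ((2 * (n0:ℝ) + 1) * K * C) ∧
        Real.cos (vSigma n0 σ (phiC n0 a K C) j)
          = σ j * Real.sqrt (1 - (redCoeff n0 j * a / ((2 * (n0:ℝ) + 1) * K * C)) ^ 2) := by
      intro j
      have := sin_cos_point (σ j) _ (hσ j) (hb j).1 (hb j).2
      simpa [vSigma, phiC] using this
    have hS : ∑ j, Real.sin (vSigma n0 σ (phiC n0 a K C) j) = 0 := by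
      calc ∑ j, Real.sin (vSigma n0 σ (phiC n0 a K C) j)
          = ∑ j, redCoeff n0 j * (a / ((2 * (n0:ℝ) + 1) * K * C)) := by
            refine Finset.sum_congr rfl fun j _ => ?_
            rw [(hsc j).1]; ring
        _ = (∑ j, redCoeff n0 j) * (a / ((2 * (n0:ℝ) + 1) * K * C)) := by rw [Finset.sum_mul]
        _ = 0 := by rw [coeff_sum, zero_mul]
    have hCeq' : (2 * (n0:ℝ) + 1) * C
        = 1 + ∑ j, σ j * Real.sqrt (1 - (redCoeff n0 j * a / ((2 * (n0:ℝ) + 1) * K * C)) ^ 2) := by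
      have h := congrArg (fun z => (2 * (n0:ℝ) + 1) * z) hCeq
      rwa [← mul_assoc, mul_one_div_cancel hNne, one_mul] at h
    have hT : 1 + ∑ j, Real.cos (vSigma n0 σ (phiC n0 a K C) j) = (2 * (n0:ℝ) + 1) * C := by
      rw [Finset.sum_congr rfl fun j _ => (hsc j).2, ← hCeq']
    rw [redField_eq, hS, hT, (hsc i).1]
    field_simp
    ring
  · intro w hw
    have key : ∀ i, redCoeff n0 i * a
        = K * ((∑ j, Real.sin (w j)) + Real.sin (w i) * (1 + ∑ j, Real.cos (w j))
          - Real.cos (w i) * ∑ j, Real.sin (w j)) := by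
      intro i
      have h := hw i
      rw [redField_eq] at h
      have h' : redCoeff n0 i * (a / (2 * (n0:ℝ) + 1)) = (K / (2 * (n0:ℝ) + 1)) *
          ((∑ j, Real.sin (w j)) + Real.sin (w i) * (1 + ∑ j, Real.cos (w j))
            - Real.cos (w i) * ∑ j, Real.sin (w j)) := by linarith
      field_simp at h'
      linear_combination h'
    have hsum : K * ((2 * (n0:ℝ) + 1) * ∑ j, Real.sin (w j)) = 0 := by
      have hexp : ∑ i, ((∑ j, Real.sin (w j)) + Real.sin (w i) * (1 + ∑ j, Real.cos (w j))
            - Real.cos (w i) * ∑ j, Real.sin (w j))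
          = (2 * (n0:ℝ) + 1) * ∑ j, Real.sin (w j) := by
        rw [Finset.sum_sub_distrib, Finset.sum_add_distrib, Finset.sum_const, ← Finset.sum_mul,
          ← Finset.sum_mul, Finset.card_univ, Fintype.card_fin, nsmul_eq_mul]
        push_cast
        ring
      calc K * ((2 * (n0:ℝ) + 1) * ∑ j, Real.sin (w j))
          = ∑ i, K * ((∑ j, Real.sin (w j)) + Real.sin (w i) * (1 + ∑ j, Real.cos (w j))
              - Real.cos (w i) * ∑ j, Real.sin (w j)) := by rw [← Finset.mul_sum, hexp]
        _ = ∑ i, redCoeff n0 i * a := Finset.sum_congr rfl fun i _ => (key i).symm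
        _ = (∑ i, redCoeff n0 i) * a := by rw [Finset.sum_mul]
        _ = 0 := by rw [coeff_sum, zero_mul]
    have hS : ∑ j, Real.sin (w j) = 0 := by
      rcases mul_eq_zero.mp hsum with h | h
      · exact absurd h hKne
      · rcases mul_eq_zero.mp h with h' | h'
        · exact absurd h' hNne
        · exact h'
    have keyD : ∀ i, K * Real.sin (w i) * (1 + ∑ j, Real.cos (w j)) = redCoeff n0 i * a := by
      intro i
      have h := key i
      rw [hS] at h
      linear_combination -h
    have i0 : Fin (2 * n0) := ⟨0, by omega⟩
    have hD : (1 + ∑ j, Real.cos (w j)) ≠ 0 := by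
      intro h0
      have h := keyD i0
      rw [h0, mul_zero] at h
      exact coeff_ne n0 i0 (by
        rcases mul_eq_zero.mp h.symm with h' | h'
        · exact h'
        · exact absurd h' (ne_of_gt ha))
    set σf : Fin (2 * n0) → ℝ := fun i => if 0 ≤ Real.cos (w i) then (1:ℝ) else -1 with hσf
    set Cv : ℝ := (1 + ∑ j, Real.cos (w j)) / (2 * (n0:ℝ) + 1) with hCv
    have hCne : Cv ≠ 0 := div_ne_zero hD hNne
    have hNKC : (2 * (n0:ℝ) + 1) * K * Cv = K * (1 + ∑ j, Real.cos (w j)) := by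
      rw [hCv]; field_simp
    have hsinw : ∀ i, Real.sin (w i) = redCoeff n0 i * a / ((2 * (n0:ℝ) + 1) * K * Cv) := by
      intro i
      rw [hNKC, eq_div_iff (mul_ne_zero hKne hD)]
      linear_combination keyD i
    have hsqrt : ∀ i, Real.sqrt (1 - (redCoeff n0 i * a / ((2 * (n0:ℝ) + 1) * K * Cv)) ^ 2)
        = |Real.cos (w i)| := by
      intro i
      rw [← hsinw i, ← Real.cos_sq', Real.sqrt_sq_eq_abs]
    have hcosw : ∀ i, Real.cos (w i)
        = σf i * Real.sqrt (1 - (redCoeff n0 i * a / ((2 * (n0:ℝ) + 1) * K * Cv)) ^ 2) := by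
      intro i
      rw [hsqrt i, hσf]
      by_cases h : 0 ≤ Real.cos (w i)
      · simp only [if_pos h, one_mul, abs_of_nonneg h]
      · simp only [if_neg h, abs_of_neg (not_le.mp h)]; ring
    have hbd : ∀ i, |redCoeff n0 i * a / ((2 * (n0:ℝ) + 1) * K * Cv)| ≤ 1 := by
      intro i
      rw [← hsinw i]
      exact abs_le.mpr ⟨Real.neg_one_le_sin _, Real.sin_le_one _⟩
    refine ⟨σf, fun i => by rw [hσf]; dsimp only; split <;> simp, Cv,
      ⟨hCne, hbd, ?_⟩, ?_⟩
    · rw [Finset.sum_congr rfl fun i _ => (hcosw i).symm, hCv]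
      ring
    · intro i
      have hb := abs_le.mp (hbd i)
      have hsc := sin_cos_point (σf i) _ (by rw [hσf]; dsimp only; split <;> simp) hb.1 hb.2
      refine eq_of_sin_cos ?_ ?_
      · rw [hsinw i]
        have h1 : Real.sin (vSigma n0 σf (phiC n0 a K Cv) i)
            = redCoeff n0 i * a / ((2 * (n0:ℝ) + 1) * K * Cv) := by
          simpa [vSigma, phiC] using hsc.1
        rw [h1]
      · have h2 : Real.cos (vSigma n0 σf (phiC n0 a K Cv) i)
            = σf i * Real.sqrt (1 - (redCoeff n0 i * a / ((2 * (n0:ℝ) + 1) * K * Cv)) ^ 2) := by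
          simpa [vSigma, phiC] using hsc.2
        rw [h2, ← hcosw i]
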